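/- If 𝒳 ⊆ ℝ^d is nonempty and compact, then the Battling Influencers Game with negative inner product loss ℓ_i(x) = −⟨t_i, w_0 x_0 + ∑_{j=1}^n w_j x_j⟩ has a weakly dominant strategy equilibrium. -/

import Mathlib

/-! The loss of player `i` is `-w_i ⟪t_i, x_i⟫` plus a term that does not depend on `x_i`,
so a maximiser of the linear functional `y ↦ w_i ⟪t_i, y⟫` over the compact set `𝒳` is a best
response to every profile of the other players. -/

open scoped RealInnerProductSpace

noncomputable section

/-- Player `i`'s negative inner product loss in the Battling Influencers Game:
`ℓ_i(x) = −⟨t_i, w_0 x_0 + ∑_{j=1}^n w_j x_j⟩`. -/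
def lossIP {d n : ℕ} (w0 : ℝ) (x0 : EuclideanSpace ℝ (Fin d)) (w : Fin n → ℝ)
    (t : Fin n → EuclideanSpace ℝ (Fin d)) (i : Fin n)
    (x : Fin n → EuclideanSpace ℝ (Fin d)) : ℝ :=
  -⟪t i, w0 • x0 + (∑ j, w j • x j)⟫

theorem Finset.sum_smul_update_sub_sum_smul_update {R M ι : Type*} [Ring R] [AddCommGroup M]
    [Module R M] [Fintype ι] [DecidableEq ι] (w : ι → R) (x : ι → M) (i : ι) (a b : M) :
    ∑ j, w j • Function.update x i a j - ∑ j, w j • Function.update x i b j = w i • (a - b) := by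
  rw [← Finset.sum_sub_distrib, Finset.sum_eq_single i]
  · simp [smul_sub]
  · intro j _ hj
    simp [Function.update_of_ne hj]
  · simp

theorem lossIP_update_sub_lossIP_update {d n : ℕ} (w0 : ℝ) (x0 : EuclideanSpace ℝ (Fin d))
    (w : Fin n → ℝ) (t : Fin n → EuclideanSpace ℝ (Fin d)) (i : Fin n)
    (x : Fin n → EuclideanSpace ℝ (Fin d)) (a b : EuclideanSpace ℝ (Fin d)) :
    lossIP w0 x0 w t i (Function.update x i a) - lossIP w0 x0 w t i (Function.update x i b)
      = w i * ⟪t i, b⟫ - w i * ⟪t i, a⟫ := by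
  have hsum := Finset.sum_smul_update_sub_sum_smul_update w x i a b
  rw [sub_eq_iff_eq_add'] at hsum
  simp only [lossIP, hsum, inner_add_right, real_inner_smul_right, inner_sub_right]
  ring

theorem lossIP_update_le_lossIP_update_iff {d n : ℕ} (w0 : ℝ) (x0 : EuclideanSpace ℝ (Fin d))
    (w : Fin n → ℝ) (t : Fin n → EuclideanSpace ℝ (Fin d)) (i : Fin n)
    (x : Fin n → EuclideanSpace ℝ (Fin d)) (a b : EuclideanSpace ℝ (Fin d)) :
    lossIP w0 x0 w t i (Function.update x i a) ≤ lossIP w0 x0 w t i (Function.update x i b)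
      ↔ w i * ⟪t i, b⟫ ≤ w i * ⟪t i, a⟫ := by
  rw [← sub_nonpos, lossIP_update_sub_lossIP_update, sub_nonpos]

/-- If `𝒳` is nonempty and compact, the Battling Influencers Game with negative
inner product loss has a weakly dominant strategy equilibrium: a profile
`x⋆ ∈ 𝒳^n` such that each `x_i⋆` is a best response to every joint action of
the other players. -/
theorem exists_wDSE {d n : ℕ} (X : Set (EuclideanSpace ℝ (Fin d)))
    (hne : X.Nonempty) (hcpt : IsCompact X)
    (w0 : ℝ) (x0 : EuclideanSpace ℝ (Fin d)) (w : Fin n → ℝ)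
    (t : Fin n → EuclideanSpace ℝ (Fin d)) :
    ∃ xstar : Fin n → EuclideanSpace ℝ (Fin d),
      (∀ i, xstar i ∈ X) ∧
        ∀ i : Fin n, ∀ x : Fin n → EuclideanSpace ℝ (Fin d), (∀ j, x j ∈ X) →
          ∀ y ∈ X,
            lossIP w0 x0 w t i (Function.update x i (xstar i))
              ≤ lossIP w0 x0 w t i (Function.update x i y) := by
  have hmax (i : Fin n) : ∃ z ∈ X, IsMaxOn (fun y => w i * ⟪t i, y⟫) X z :=
    hcpt.exists_isMaxOn hne (by fun_prop)
  choose xstar hxstar hxstar_max using hmax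
  exact ⟨xstar, hxstar, fun i x _ y hy =>
    (lossIP_update_le_lossIP_update_iff w0 x0 w t i x _ y).2 (hxstar_max i hy)⟩

end
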